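/- Suppose the ontology O admits containment reduction (with (q̂, a) the pointed data instance provided for each CQ q), q ∈ Q is satisfiable wrt O, and q has a unique characterisation E = (E⁺, E⁻) wrt O within the query class Q. Then E' = ({(q̂, a)}, E⁻) is also a unique characterisation of q wrt O within Q. Consequently, every query in Q that is satisfiable wrt O and uniquely characterisable wrt O within Q has a singular⁺ characterisation wrt O within Q. -/
import Mathlib


namespace OMQLean

/-! ## Basic objects: constants, variables, atoms, data instances -/

abbrev Const := ℕ
abbrev Var := ℕ

/-- Atoms of data instances: `⊤(a)`, `A(a)`, `P(a,b)` (predicates named by naturals). -/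
inductive Atom where
  | top : Const → Atom
  | un : ℕ → Const → Atom
  | bin : ℕ → Const → Const → Atom
deriving DecidableEq

def Atom.consts : Atom → Finset Const
  | .top a => {a}
  | .un _ a => {a}
  | .bin _ a b => {a, b}

/-- A data instance: a nonempty finite set of atoms. -/
structure DataInstance where
  atoms : Finset Atom
  nonemp : atoms.Nonempty

instance : DecidableEq DataInstance := fun A B =>
  decidable_of_iff (A.atoms = B.atoms) (by cases A; cases B; simp)

/-- The individuals (constants) occurring in a data instance. -/
def DataInstance.ind (A : DataInstance) : Finset Const := A.atoms.biUnion Atom.consts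

/-! ## First-order logic over the signature -/

inductive Term where
  | var : Var → Term
  | cst : Const → Term
deriving DecidableEq

inductive Fml where
  | top : Fml
  | bot : Fml
  | eq : Term → Term → Fml
  | un : ℕ → Term → Fml
  | bin : ℕ → Term → Term → Fml
  | and : Fml → Fml → Fml
  | or : Fml → Fml → Fml
  | imp : Fml → Fml → Fml
  | not : Fml → Fml
  | all : Var → Fml → Fml
  | ex : Var → Fml → Fml
deriving DecidableEq

/-- An ontology is a finite set of first-order sentences. -/
abbrev Ontology := Finset Fml

/-- An interpretation with domain `D`; constants are interpreted injectively
(standard name assumption: distinct constants denote distinct elements). -/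
structure Interp (D : Type) where
  cst : Const → D
  cstInj : Function.Injective cst
  un : ℕ → D → Prop
  bin : ℕ → D → D → Prop

def Term.eval {D : Type} (I : Interp D) (ν : Var → D) : Term → D
  | .var v => ν v
  | .cst c => I.cst c

def Fml.Holds {D : Type} (I : Interp D) : (Var → D) → Fml → Prop
  | _, .top => True
  | _, .bot => False
  | ν, .eq t s => t.eval I ν = s.eval I ν
  | ν, .un A t => I.un A (t.eval I ν)
  | ν, .bin P t s => I.bin P (t.eval I ν) (s.eval I ν)
  | ν, .and f g => f.Holds I ν ∧ g.Holds I ν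
  | ν, .or f g => f.Holds I ν ∨ g.Holds I ν
  | ν, .imp f g => f.Holds I ν → g.Holds I ν
  | ν, .not f => ¬ f.Holds I ν
  | ν, .all v f => ∀ d : D, f.Holds I (Function.update ν v d)
  | ν, .ex v f => ∃ d : D, f.Holds I (Function.update ν v d)

def Interp.satAtom {D : Type} (I : Interp D) : Atom → Prop
  | .top _ => True
  | .un A a => I.un A (I.cst a)
  | .bin P a b => I.bin P (I.cst a) (I.cst b)

def Interp.modelsO {D : Type} (I : Interp D) (O : Ontology) : Prop :=
  ∀ f ∈ O, ∀ ν : Var → D, Fml.Holds I ν f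

def Interp.modelsD {D : Type} (I : Interp D) (A : DataInstance) : Prop :=
  ∀ α ∈ A.atoms, I.satAtom α

/-- A formula contains no equality. -/
def Fml.noEq : Fml → Prop
  | .eq _ _ => False
  | .and f g => f.noEq ∧ g.noEq
  | .or f g => f.noEq ∧ g.noEq
  | .imp f g => f.noEq ∧ g.noEq
  | .not f => f.noEq
  | .all _ f => f.noEq
  | .ex _ f => f.noEq
  | _ => True

def Fml.size : Fml → ℕ
  | .top => 1
  | .bot => 1
  | .eq _ _ => 1
  | .un _ _ => 1
  | .bin _ _ _ => 1
  | .and f g => f.size + g.size + 1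
  | .or f g => f.size + g.size + 1
  | .imp f g => f.size + g.size + 1
  | .not f => f.size + 1
  | .all _ f => f.size + 1
  | .ex _ f => f.size + 1

def ontSize (O : Ontology) : ℕ := ∑ f ∈ O, f.size

/-! ## Conjunctive queries with one answer variable (the variable `0`) -/

inductive CQAtom where
  | top : Var → CQAtom
  | un : ℕ → Var → CQAtom
  | bin : ℕ → Var → Var → CQAtom
deriving DecidableEq

def CQAtom.vars : CQAtom → Finset Var
  | .top v => {v}
  | .un _ v => {v}
  | .bin _ v w => {v, w}

/-- A conjunctive query, identified with its finite set of atoms;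
the answer variable is `0`. -/
structure CQ where
  atoms : Finset CQAtom
deriving DecidableEq

instance : Inhabited CQ := ⟨⟨∅⟩⟩

/-- The query `⊤`. -/
def topCQ : CQ := ⟨∅⟩

def CQ.vars (q : CQ) : Finset Var := insert 0 (q.atoms.biUnion CQAtom.vars)

/-- Conjunction of two CQs (sharing the answer variable). -/
def CQ.and (q₁ q₂ : CQ) : CQ := ⟨q₁.atoms ∪ q₂.atoms⟩

def CQ.size (q : CQ) : ℕ := q.atoms.card + 1

def CQAtom.holds {D : Type} (I : Interp D) (h : Var → D) : CQAtom → Prop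
  | .top _ => True
  | .un A v => I.un A (h v)
  | .bin P v w => I.bin P (h v) (h w)

def Interp.satCQ {D : Type} (I : Interp D) (q : CQ) (d : D) : Prop :=
  ∃ h : Var → D, h 0 = d ∧ ∀ α ∈ q.atoms, CQAtom.holds I h α

/-- `cert O A q a`: `a` is a certain answer to `q` over `A` wrt `O`,
i.e. `O, A ⊨ q(a)`. -/
def cert (O : Ontology) (A : DataInstance) (q : CQ) (a : Const) : Prop :=
  ∀ (D : Type) (I : Interp D), I.modelsO O → I.modelsD A → I.satCQ q (I.cst a)

/-- `O` and `A` are (jointly) satisfiable. -/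
def DataInstance.satWith (O : Ontology) (A : DataInstance) : Prop :=
  ∃ (D : Type) (I : Interp D), I.modelsO O ∧ I.modelsD A

/-- `q(x)` is satisfiable wrt `O`: `O ∪ {q(x)}` has a model. -/
def CQ.satWrt (O : Ontology) (q : CQ) : Prop :=
  ∃ (D : Type) (I : Interp D) (d : D), I.modelsO O ∧ I.satCQ q d

/-- Containment `q₁ ⊨_O q₂`. -/
def containsO (O : Ontology) (q₁ q₂ : CQ) : Prop :=
  ∀ (A : DataInstance) (a : Const), a ∈ A.ind → cert O A q₁ a → cert O A q₂ a

/-- Equivalence `q₁ ≡_O q₂`. -/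
def equivO (O : Ontology) (q₁ q₂ : CQ) : Prop :=
  containsO O q₁ q₂ ∧ containsO O q₂ q₁

def CQAtom.mapVar (g : Var → Var) : CQAtom → CQAtom
  | .top v => .top (g v)
  | .un A v => .un A (g v)
  | .bin P v w => .bin P (g v) (g w)

def CQ.mapVars (g : Var → Var) (q : CQ) : CQ := ⟨q.atoms.image (CQAtom.mapVar g)⟩

def CQAtom.toAtom (g : Var → Const) : CQAtom → Atom
  | .top v => .top (g v)
  | .un A v => .un A (g v)
  | .bin P v w => .bin P (g v) (g w)

def CQAtom.presIn (A : DataInstance) (h : Var → Const) : CQAtom → Prop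
  | .top _ => True
  | .un B v => Atom.un B (h v) ∈ A.atoms
  | .bin P v w => Atom.bin P (h v) (h w) ∈ A.atoms

/-- A homomorphism from the CQ `q` to the data instance `A`. -/
def IsHom (q : CQ) (A : DataInstance) (h : Var → Const) : Prop :=
  (∀ v ∈ q.vars, h v ∈ A.ind) ∧ ∀ α ∈ q.atoms, CQAtom.presIn A h α

def HomSurj (q : CQ) (A : DataInstance) (h : Var → Const) : Prop :=
  ∀ c ∈ A.ind, ∃ v ∈ q.vars, h v = c

/-- The pointed data instance induced by a CQ: replace every variable `v` by the
constant `v` (distinct fresh constants); the answer variable `0` becomes the point `0`. -/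
def inducedDI (q : CQ) : DataInstance :=
  ⟨insert (Atom.top 0) (q.atoms.image (CQAtom.toAtom id)), Finset.insert_nonempty _ _⟩

/-- `hat` witnesses that `O` admits containment reduction: conditions (cr1)-(cr3). -/
structure CRWitness (O : Ontology) (hat : CQ → DataInstance × Const) : Prop where
  mem : ∀ q : CQ, (hat q).2 ∈ (hat q).1.ind
  cr1 : ∀ q : CQ, (CQ.satWrt O q ↔ DataInstance.satWith O (hat q).1)
  cr2 : ∀ q : CQ, ∃ h : Var → Const,
    IsHom q (hat q).1 h ∧ h 0 = (hat q).2 ∧ HomSurj q (hat q).1 h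
  cr3 : ∀ q : CQ, CQ.satWrt O q →
    ∀ q' : CQ, (containsO O q q' ↔ cert O (hat q).1 q' (hat q).2)

def AdmitsCR (O : Ontology) : Prop := ∃ hat, CRWitness O hat

/-! ## Example sets, unique characterisations, frontiers, meet-reducibility, split-partners -/

/-- An example set: finite sets of positive and negative pointed data instances. -/
structure ExampleSet where
  pos : Finset (DataInstance × Const)
  neg : Finset (DataInstance × Const)

def ExampleSet.wf (E : ExampleSet) : Prop :=
  (∀ p ∈ E.pos, p.2 ∈ p.1.ind) ∧ (∀ p ∈ E.neg, p.2 ∈ p.1.ind)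

def fits (O : Ontology) (q : CQ) (E : ExampleSet) : Prop :=
  (∀ p ∈ E.pos, cert O p.1 q p.2) ∧ (∀ p ∈ E.neg, ¬ cert O p.1 q p.2)

/-- `E` uniquely characterises `q` wrt `O` within the class `Q`. -/
def uniqChar (O : Ontology) (Q : Set CQ) (q : CQ) (E : ExampleSet) : Prop :=
  E.wf ∧ fits O q E ∧ ∀ q' ∈ Q, fits O q' E → equivO O q q'

def ExampleSet.size (E : ExampleSet) : ℕ :=
  (∑ p ∈ E.pos, (p.1.atoms.card + 1)) + (∑ p ∈ E.neg, (p.1.atoms.card + 1))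

/-- A frontier of `q` wrt `O` within the class `Q`. -/
def IsFrontier (O : Ontology) (Q : Set CQ) (q : CQ) (F : Set CQ) : Prop :=
  F ⊆ Q ∧ (∀ q' ∈ F, containsO O q q' ∧ ¬ containsO O q' q) ∧
  ∀ q'' ∈ Q, containsO O q q'' → (containsO O q'' q ∨ ∃ q' ∈ F, containsO O q' q'')

/-- `r` is meet-reducible wrt `O` within `Q`. -/
def MeetReducible (O : Ontology) (Q : Set CQ) (r : CQ) : Prop :=
  ∃ r₁ ∈ Q, ∃ r₂ ∈ Q, equivO O r (CQ.and r₁ r₂) ∧ ¬ equivO O r r₁ ∧ ¬ equivO O r r₂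

/-- `O` admits singular⁺ characterisations within `Q` (via the containment-reduction map `hat`):
every satisfiable query in `Q` has a unique characterisation with positive part `{hat q}`. -/
def AdmitsSingPlus (O : Ontology) (hat : CQ → DataInstance × Const) (Q : Set CQ) : Prop :=
  ∀ q ∈ Q, CQ.satWrt O q →
    ∃ N : Finset (DataInstance × Const), uniqChar O Q q ⟨{hat q}, N⟩

/-- `O` admits singular⁺ characterisations within `Q` of size bounded by the polynomial `p`. -/
def PolySingPlus (O : Ontology) (hat : CQ → DataInstance × Const) (Q : Set CQ)
    (p : Polynomial ℕ) : Prop :=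
  ∀ q ∈ Q, CQ.satWrt O q →
    ∃ N : Finset (DataInstance × Const), uniqChar O Q q ⟨{hat q}, N⟩ ∧
      ExampleSet.size ⟨{hat q}, N⟩ ≤ p.eval q.size

/-! ## Signatures -/

/-- A finite relational signature: a finite set of unary and of binary predicate names. -/
abbrev Sig := Finset ℕ × Finset ℕ

def Atom.inSig (σ : Sig) : Atom → Prop
  | .top _ => True
  | .un A _ => A ∈ σ.1
  | .bin P _ _ => P ∈ σ.2

def DataInstance.inSig (σ : Sig) (A : DataInstance) : Prop := ∀ α ∈ A.atoms, α.inSig σ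

def CQAtom.inSig (σ : Sig) : CQAtom → Prop
  | .top _ => True
  | .un A _ => A ∈ σ.1
  | .bin P _ _ => P ∈ σ.2

def CQ.inSig (σ : Sig) (q : CQ) : Prop := ∀ α ∈ q.atoms, α.inSig σ

def Fml.inSig (σ : Sig) : Fml → Prop
  | .top => True
  | .bot => True
  | .eq _ _ => True
  | .un A _ => A ∈ σ.1
  | .bin P _ _ => P ∈ σ.2
  | .and f g => f.inSig σ ∧ g.inSig σ
  | .or f g => f.inSig σ ∧ g.inSig σ
  | .imp f g => f.inSig σ ∧ g.inSig σ
  | .not f => f.inSig σ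
  | .all _ f => f.inSig σ
  | .ex _ f => f.inSig σ

/-- The restriction `Q^σ` of a class of queries to the signature `σ`. -/
def Qsig (Q : Set CQ) (σ : Sig) : Set CQ := {s | s ∈ Q ∧ s.inSig σ}

/-- `S` is a split-partner for the finite set `Qf` of queries wrt `O` within the
class `Qcls` of `σ`-queries. -/
def IsSplitPartner (O : Ontology) (σ : Sig) (Qcls : Set CQ) (Qf : Finset CQ)
    (S : Finset (DataInstance × Const)) : Prop :=
  (∀ p ∈ S, p.1.inSig σ ∧ p.2 ∈ p.1.ind) ∧
  ∀ q' ∈ Qcls, ((∃ p ∈ S, cert O p.1 q' p.2) ↔ ∀ q ∈ Qf, ¬ containsO O q' q)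

def splitSize (S : Finset (DataInstance × Const)) : ℕ := ∑ p ∈ S, (p.1.atoms.card + 1)

def finsetCQSize (Qf : Finset CQ) : ℕ := ∑ s ∈ Qf, s.size

/-- `q' ⊨_O ⊥`. -/
def containsBot (O : Ontology) (q' : CQ) : Prop :=
  ∀ (A : DataInstance) (a : Const), a ∈ A.ind → cert O A q' a → ¬ A.satWith O

/-- `S` is a split-partner for `{⊥(x)}` wrt `O` within `Qcls`. -/
def IsBotSplitPartner (O : Ontology) (σ : Sig) (Qcls : Set CQ)
    (S : Finset (DataInstance × Const)) : Prop :=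
  (∀ p ∈ S, p.1.inSig σ ∧ p.2 ∈ p.1.ind) ∧
  ∀ q' ∈ Qcls, ((∃ p ∈ S, cert O p.1 q' p.2) ↔ ¬ containsBot O q')

/-! ## Description logic: roles, DL-Lite_F, ALCHI, ELIQs -/

inductive DLRole where
  | nm : ℕ → DLRole
  | inv : ℕ → DLRole
deriving DecidableEq

def DLRole.fml (S : DLRole) (x y : Var) : Fml :=
  match S with
  | .nm P => .bin P (.var x) (.var y)
  | .inv P => .bin P (.var y) (.var x)

def DLRole.inSig (σ : Sig) : DLRole → Prop
  | .nm P => P ∈ σ.2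
  | .inv P => P ∈ σ.2

/-- Basic concepts of DL-Lite: a concept name or `∃ S`. -/
inductive DLBasic where
  | cn : ℕ → DLBasic
  | ex : DLRole → DLBasic
deriving DecidableEq

/-- The standard translation of a basic concept, with free variable `0`. -/
def DLBasic.fml : DLBasic → Fml
  | .cn A => .un A (.var 0)
  | .ex S => .ex 1 (S.fml 0 1)

/-- DL-Lite_F axioms: concept inclusions, concept disjointness, functionality. -/
inductive DLLiteFAx where
  | incl : DLBasic → DLBasic → DLLiteFAx
  | disj : DLBasic → DLBasic → DLLiteFAx
  | func : DLRole → DLLiteFAx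
deriving DecidableEq

def DLLiteFAx.fml : DLLiteFAx → Fml
  | .incl B B' => .all 0 (.imp B.fml B'.fml)
  | .disj B B' => .all 0 (.imp (.and B.fml B'.fml) .bot)
  | .func S => .all 0 (.all 1 (.all 2 (.imp (.and (S.fml 0 1) (S.fml 0 2))
      (.eq (.var 1) (.var 2)))))

/-- `O` is a DL-Lite_F ontology. -/
def IsDLLiteF (O : Ontology) : Prop := ∀ f ∈ O, ∃ ax : DLLiteFAx, f = ax.fml

/-- ALCHI concepts. -/
inductive AConcept where
  | top : AConcept
  | cn : ℕ → AConcept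
  | and : AConcept → AConcept → AConcept
  | not : AConcept → AConcept
  | ex : DLRole → AConcept → AConcept
deriving DecidableEq

/-- Standard translation of an ALCHI concept with free variable `v`
(quantified variables increase). -/
def AConcept.fml : AConcept → Var → Fml
  | .top, _ => .top
  | .cn A, v => .un A (.var v)
  | .and C D, v => .and (C.fml v) (D.fml v)
  | .not C, v => .not (C.fml v)
  | .ex S C, v => .ex (v+1) (.and (S.fml v (v+1)) (C.fml (v+1)))

def AConcept.inSig (σ : Sig) : AConcept → Prop
  | .top => True
  | .cn A => A ∈ σ.1
  | .and C D => C.inSig σ ∧ D.inSig σ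
  | .not C => C.inSig σ
  | .ex S C => S.inSig σ ∧ C.inSig σ

/-- ALCHI axioms: concept inclusions and role inclusions. -/
inductive ALCHIAx where
  | ci : AConcept → AConcept → ALCHIAx
  | ri : DLRole → DLRole → ALCHIAx
deriving DecidableEq

def ALCHIAx.fml : ALCHIAx → Fml
  | .ci C D => .all 0 (.imp (C.fml 0) (D.fml 0))
  | .ri S S' => .all 0 (.all 1 (.imp (S.fml 0 1) (S'.fml 0 1)))

def ALCHIAx.inSig (σ : Sig) : ALCHIAx → Prop
  | .ci C D => C.inSig σ ∧ D.inSig σ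
  | .ri S S' => S.inSig σ ∧ S'.inSig σ

/-- `O` is an ALCHI ontology in the signature `σ`. -/
def IsALCHI (σ : Sig) (O : Ontology) : Prop :=
  ∀ f ∈ O, ∃ ax : ALCHIAx, f = ax.fml ∧ ax.inSig σ

/-- ELIQs: `q ::= ⊤ | A | ∃P.q | ∃P⁻.q | q ∧ q'`. -/
inductive ELIQ where
  | top : ELIQ
  | un : ℕ → ELIQ
  | exN : ℕ → ELIQ → ELIQ
  | exI : ℕ → ELIQ → ELIQ
  | and : ELIQ → ELIQ → ELIQ
deriving DecidableEq

def ELIQ.size : ELIQ → ℕ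
  | .top => 1
  | .un _ => 1
  | .exN _ e => e.size + 1
  | .exI _ e => e.size + 1
  | .and e₁ e₂ => e₁.size + e₂.size + 1

def ELIQ.inSig (σ : Sig) : ELIQ → Prop
  | .top => True
  | .un A => A ∈ σ.1
  | .exN P e => P ∈ σ.2 ∧ e.inSig σ
  | .exI P e => P ∈ σ.2 ∧ e.inSig σ
  | .and e₁ e₂ => e₁.inSig σ ∧ e₂.inSig σ

/-- Atoms of the tree-shaped CQ of an ELIQ: root variable `v`, fresh variables from `n`.
Returns the atoms and the next fresh variable. -/
def ELIQ.atomsAux : ELIQ → Var → ℕ → Finset CQAtom × ℕ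
  | .top, _, n => (∅, n)
  | .un A, v, n => ({CQAtom.un A v}, n)
  | .exN P e, v, n =>
      let r := e.atomsAux n (n+1)
      (insert (CQAtom.bin P v n) r.1, r.2)
  | .exI P e, v, n =>
      let r := e.atomsAux n (n+1)
      (insert (CQAtom.bin P n v) r.1, r.2)
  | .and e₁ e₂, v, n =>
      let r₁ := e₁.atomsAux v n
      let r₂ := e₂.atomsAux v r₁.2
      (r₁.1 ∪ r₂.1, r₂.2)

/-- The tree-shaped CQ corresponding to an ELIQ (answer variable `0`). -/
def ELIQ.toCQ (e : ELIQ) : CQ := ⟨(e.atomsAux 0 1).1⟩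

/-- The class of all `σ`-ELIQs, as a class of CQs. -/
def ELIQclass (σ : Sig) : Set CQ := {q | ∃ e : ELIQ, e.inSig σ ∧ q = e.toCQ}

/-- The class of all ELIQs, as a class of CQs. -/
def ELIQall : Set CQ := {q | ∃ e : ELIQ, q = e.toCQ}

/-- A CQ-frontier for a query `q` wrt `O` (competitors range over ELIQs). -/
def IsCQFrontier (O : Ontology) (q : CQ) (F : Set CQ) : Prop :=
  (∀ q' ∈ F, ∀ e : ELIQ, containsO O q' e.toCQ →
    containsO O q e.toCQ ∧ ¬ containsO O e.toCQ q) ∧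
  ∀ e : ELIQ, containsO O q e.toCQ → ¬ containsO O e.toCQ q →
    ∃ q' ∈ F, containsO O q' e.toCQ

/-! ## Temporal data instances and temporal path queries -/

/-- The "empty" data instance `∅ = {⊤(a)}` (semantically inert padding). -/
def DataInstance.empty : DataInstance := ⟨{Atom.top 0}, by simp⟩

/-- A temporal data instance: a nonempty finite sequence of data instances,
all over the same set `inds` of individuals (implicitly padded with `⊤`-atoms). -/
structure TDI where
  seq : List DataInstance
  ne : seq ≠ []
  inds : Finset Const
  ok : ∀ A ∈ seq, A.ind ⊆ inds

/-- The data instance at timestamp `ℓ` (the empty instance beyond the end). -/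
def TDI.nth (D : TDI) (ℓ : ℕ) : DataInstance := D.seq.getD ℓ DataInstance.empty

def TDI.satWith (O : Ontology) (D : TDI) : Prop := ∀ A ∈ D.seq, A.satWith O

def TDI.size (D : TDI) : ℕ := (D.seq.map (fun A => A.atoms.card + 1)).sum

/-- Temporal operators: `○` (next), `◇` (sometime strictly later), `◇r` (now or later). -/
inductive TOp where
  | nxt : TOp
  | dia : TOp
  | diar : TOp
deriving DecidableEq

instance : Inhabited TOp := ⟨TOp.nxt⟩

/-- A temporal path query `r₀ ∧ o₁(r₁ ∧ o₂(r₂ ∧ ⋯ ∧ oₙ rₙ))` from the class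
`LTL_p^{○◇◇r}(Q)`, given by the head `r₀` and the list `[(o₁,r₁),…,(oₙ,rₙ)]`. -/
structure TPQ where
  head : CQ
  tail : List (TOp × CQ)

/-- Temporal depth. -/
def TPQ.tdp (q : TPQ) : ℕ := q.tail.length

/-- The domain query at position `j` (`0 ≤ j ≤ tdp`). -/
def TPQ.r (q : TPQ) (j : ℕ) : CQ := if j = 0 then q.head else (q.tail.getD (j-1) default).2

/-- The temporal operator between positions `j-1` and `j` (for `1 ≤ j ≤ tdp`). -/
def TPQ.op (q : TPQ) (j : ℕ) : TOp := (q.tail.getD (j-1) default).1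

def TPQ.size (q : TPQ) : ℕ := q.head.size + (q.tail.map (fun p => p.2.size + 1)).sum

/-- The query is built from domain queries in `Q`. -/
def TPQ.overQ (Q : Set CQ) (q : TPQ) : Prop := q.head ∈ Q ∧ ∀ p ∈ q.tail, p.2 ∈ Q

/-- The query uses only `○` and `◇` (no `◇r`). -/
def TPQ.noDiar (q : TPQ) : Prop := ∀ p ∈ q.tail, p.1 ≠ TOp.diar

def entailsAux (O : Ontology) (D : TDI) (a : Const) :
    List (TOp × CQ) → ℕ → CQ → Prop
  | [], ℓ, r => cert O (D.nth ℓ) r a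
  | (op, r') :: rest, ℓ, r =>
      cert O (D.nth ℓ) r a ∧
      match op with
      | .nxt => entailsAux O D a rest (ℓ+1) r'
      | .dia => ∃ m, ℓ < m ∧ entailsAux O D a rest m r'
      | .diar => ∃ m, ℓ ≤ m ∧ entailsAux O D a rest m r'

/-- `O, D, 0, a ⊨ q` (everything is entailed if `O` and `D` are unsatisfiable). -/
def entailsT (O : Ontology) (D : TDI) (a : Const) (q : TPQ) : Prop :=
  ¬ D.satWith O ∨ entailsAux O D a q.tail 0 q.head

/-- Equivalence of temporal path queries wrt `O`: same entailment at time `0` on all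
pointed temporal data instances. -/
def equivT (O : Ontology) (q₁ q₂ : TPQ) : Prop :=
  ∀ (D : TDI) (a : Const), a ∈ D.inds → (entailsT O D a q₁ ↔ entailsT O D a q₂)

/-- A temporal example set (finite sets of pointed temporal data instances, as lists). -/
structure TExampleSet where
  pos : List (TDI × Const)
  neg : List (TDI × Const)

def TExampleSet.wf (E : TExampleSet) : Prop :=
  (∀ p ∈ E.pos, p.2 ∈ p.1.inds) ∧ (∀ p ∈ E.neg, p.2 ∈ p.1.inds)

def TExampleSet.size (E : TExampleSet) : ℕ :=
  (E.pos.map (fun p => p.1.size + 1)).sum + (E.neg.map (fun p => p.1.size + 1)).sum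

def fitsT (O : Ontology) (q : TPQ) (E : TExampleSet) : Prop :=
  (∀ p ∈ E.pos, entailsT O p.1 p.2 q) ∧ (∀ p ∈ E.neg, ¬ entailsT O p.1 p.2 q)

/-- `E` uniquely characterises the temporal query `q` wrt `O` within the class `C`. -/
def uniqCharT (O : Ontology) (C : Set TPQ) (q : TPQ) (E : TExampleSet) : Prop :=
  E.wf ∧ fitsT O q E ∧ ∀ q' ∈ C, fitsT O q' E → equivT O q q'

def TPQclass (Q : Set CQ) : Set TPQ := {q | q.overQ Q}
def TPQclassDepth (Q : Set CQ) (n : ℕ) : Set TPQ := {q | q.overQ Q ∧ q.tdp ≤ n}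
def TPQclassND (Q : Set CQ) : Set TPQ := {q | q.overQ Q ∧ q.noDiar}

/-! ### Normal form, lone conjuncts, safety -/

/-- Normal form of a path query wrt `O` (conditions (n1)-(n5), stated on the
sequence representation: `○` corresponds to `suc`, `◇` to `<`, `◇r` to `≤`;
positions `j ≥ 1` whose query is `≡_O ⊤` are internal to a relation sequence `R_i`). -/
def NormalForm (O : Ontology) (q : TPQ) : Prop :=
  ∀ j, 1 ≤ j → j ≤ q.tdp →
    (equivO O (q.r j) topCQ →
        (j < q.tdp ∧ q.op j = q.op (j+1) ∧ q.op j ≠ TOp.diar)) ∧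
    (q.op j = TOp.diar → (j = q.tdp ∨ q.op (j+1) ≠ TOp.nxt) →
        ¬ containsO O (q.r (j-1)) (q.r j)) ∧
    (q.op j = TOp.diar → 2 ≤ j → q.op (j-1) ≠ TOp.nxt →
        ¬ containsO O (q.r j) (q.r (j-1))) ∧
    (q.op j = TOp.diar → CQ.satWrt O (CQ.and (q.r (j-1)) (q.r j)))

/-- `q` has a lone conjunct wrt `O` within `Q`: a primitive block `q_i` (`i > 0`)
whose query is meet-reducible wrt `O` within `Q`. -/
def HasLoneConjunct (O : Ontology) (Q : Set CQ) (q : TPQ) : Prop :=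
  ∃ j, 1 ≤ j ∧ j ≤ q.tdp ∧ q.op j ≠ TOp.nxt ∧
    (j = q.tdp ∨ q.op (j+1) ≠ TOp.nxt) ∧
    ¬ equivO O (q.r j) topCQ ∧ MeetReducible O Q (q.r j)

/-- `q` is safe wrt `O`: equivalent wrt `O` to a query in normal form without
lone conjuncts. -/
def Safe (O : Ontology) (Q : Set CQ) (q : TPQ) : Prop :=
  ∃ q' : TPQ, q'.overQ Q ∧ NormalForm O q' ∧ ¬ HasLoneConjunct O Q q' ∧ equivT O q q'

/-! ### b-normal temporal data instances built from blocks of queries -/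

def listInds (L : List DataInstance) : Finset Const :=
  L.foldr (fun A s => A.ind ∪ s) ∅

theorem mem_listInds {L : List DataInstance} {A : DataInstance} (h : A ∈ L) :
    A.ind ⊆ listInds L := by
  induction L with
  | nil => simp at h
  | cons B T ih =>
    rw [List.mem_cons] at h
    rcases h with rfl | h
    · exact Finset.subset_union_left
    · exact (ih h).trans Finset.subset_union_right

/-- Assemble a list of data instances into a temporal data instance. -/
def mkTDI : List DataInstance → TDI
  | [] => { seq := [DataInstance.empty], ne := by simp,
            inds := listInds [DataInstance.empty], ok := fun _ h => mem_listInds h }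
  | A :: L => { seq := A :: L, ne := by simp,
                inds := listInds (A :: L), ok := fun _ h => mem_listInds h }

/-- The `b`-normal sequence `D_0 ∅^b D_1 ∅^b ⋯ ∅^b D_n` determined by the block
structure `bs` of queries, with `D_i = ŝ_0^i … ŝ_{k_i}^i`. -/
def bSeq (hat : CQ → DataInstance × Const) (b : ℕ) (bs : List (List CQ)) :
    List DataInstance :=
  List.intercalate (List.replicate b DataInstance.empty)
    (bs.map (List.map (fun s => (hat s).1)))

/-- The first timestamp of block `i` in the assembled `b`-normal instance. -/
def dStart (bs : List (List CQ)) (b i : ℕ) : ℕ :=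
  ((bs.take i).map List.length).sum + b * i

/-- The block structure `bs` describes a `b`-normal temporal data instance wrt `O`. -/
def BNormal (O : Ontology) (b : ℕ) (bs : List (List CQ)) : Prop :=
  bs ≠ [] ∧ (∀ blk ∈ bs, blk ≠ [] ∧ blk.length ≤ b) ∧
  ∀ i < bs.length,
    (0 < i → ¬ equivO O ((bs.getD i []).headD default) topCQ) ∧
    ((0 < i ∨ 1 < (bs.getD i []).length) →
      ¬ equivO O ((bs.getD i []).getLastD default) topCQ)

/-- No block of the data instance is a lone conjunct wrt `O` within `Q`. -/
def NoLoneConjuncts (O : Ontology) (Q : Set CQ) (bs : List (List CQ)) : Prop :=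
  ∀ i, 0 < i → i < bs.length → ∀ s, bs.getD i [] = [s] → ¬ MeetReducible O Q s

/-- A root `O`-homomorphism from the path query `q` into the pointed temporal data
instance `(D, a)`. -/
def RootHom (O : Ontology) (q : TPQ) (D : TDI) (a : Const) (h : ℕ → ℕ) : Prop :=
  h 0 = 0 ∧
  (∀ j ≤ q.tdp, h j < D.seq.length ∧ cert O (D.nth (h j)) (q.r j) a) ∧
  ∀ j, 1 ≤ j → j ≤ q.tdp →
    match q.op j with
    | .nxt => h j = h (j-1) + 1
    | .dia => h (j-1) < h j
    | .diar => h (j-1) ≤ h j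

/-- Position `j` of `q` belongs to a block (rather than being internal to a
relation sequence `R_i`). -/
def Blockish (O : Ontology) (q : TPQ) (j : ℕ) : Prop :=
  j = 0 ∨ q.op j = TOp.nxt ∨ ¬ equivO O (q.r j) topCQ

/-- The index of the block of `q` containing position `j`. -/
noncomputable def qBlockIdx (O : Ontology) (q : TPQ) (j : ℕ) : ℕ :=
  {j' : ℕ | j' < j ∧ Blockish O q (j'+1) ∧ q.op (j'+1) ≠ TOp.nxt}.ncard

/-- The conjunction `r_ℓ = ⋀_{h(t) = ℓ} r_t` of all domain queries of `q` mapped to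
timestamp `ℓ` by `h`. -/
def conjAt (q : TPQ) (h : ℕ → ℕ) (ℓ : ℕ) : CQ :=
  ⟨((Finset.range (q.tdp + 1)).filter (fun j => h j = ℓ)).biUnion (fun j => (q.r j).atoms)⟩

/-- `h` is data surjective. -/
def DataSurj (O : Ontology) (hat : CQ → DataInstance × Const) (N : CQ → Finset CQ)
    (bs : List (List CQ)) (b : ℕ) (q : TPQ) (h : ℕ → ℕ) : Prop :=
  ∀ i j, i < bs.length → j < (bs.getD i []).length →
    (∃ t ≤ q.tdp, h t = dStart bs b i + j) →
    ¬ equivO O ((bs.getD i []).getD j default) topCQ →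
    ∀ s' ∈ N ((bs.getD i []).getD j default),
      ¬ cert O (hat s').1 (conjAt q h (dStart bs b i + j)) (hat s').2

/-- `h` is a root `O`-isomorphism from `q` onto the `b`-normal instance given by `bs`. -/
def RootIso (O : Ontology) (hat : CQ → DataInstance × Const) (N : CQ → Finset CQ)
    (bs : List (List CQ)) (b : ℕ) (a : Const) (q : TPQ) (h : ℕ → ℕ) : Prop :=
  RootHom O q (mkTDI (bSeq hat b bs)) a h ∧
  DataSurj O hat N bs b q h ∧
  qBlockIdx O q q.tdp + 1 = bs.length ∧
  ∀ i < bs.length,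
    Set.BijOn h {j | j ≤ q.tdp ∧ Blockish O q j ∧ qBlockIdx O q j = i}
      {ℓ | ∃ j < (bs.getD i []).length, ℓ = dStart bs b i + j}

/-- The rewrite rules (a)-(e) on block structures of `b`-normal temporal data
instances (negative examples are drawn from `N`). -/
inductive RuleStep (O : Ontology) (N : CQ → Finset CQ) :
    List (List CQ) → List (List CQ) → Prop
  | ruleA (pre post : List (List CQ)) (u v : List CQ) (s s' : CQ)
      (hs : ¬ equivO O s topCQ) (hs' : s' ∈ N s) (hpos : pre ≠ [] ∨ u ≠ []) :
      RuleStep O N (pre ++ (u ++ s :: v) :: post) (pre ++ (u ++ s' :: v) :: post)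
  | ruleB (pre post : List (List CQ)) (u v : List CQ) (x y : CQ) :
      RuleStep O N (pre ++ (u ++ x :: y :: v) :: post)
        (pre ++ (u ++ [x]) :: (y :: v) :: post)
  | ruleC (pre post : List (List CQ)) (u v : List CQ) (s : CQ)
      (hs : ¬ equivO O s topCQ) (hu : u ≠ []) (hv : v ≠ []) :
      RuleStep O N (pre ++ (u ++ s :: v) :: post)
        (pre ++ (u ++ [s]) :: (s :: v) :: post)
  | ruleD1 (pre post : List (List CQ)) (u : List CQ) (x s' : CQ)
      (hu : u ≠ []) (hs' : s' ∈ N x) :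
      RuleStep O N (pre ++ (u ++ [x]) :: post) (pre ++ (u ++ [s']) :: [x] :: post)
  | ruleD2 (pre post : List (List CQ)) (v : List CQ) (x s' : CQ)
      (hv : v ≠ []) (hs' : s' ∈ N x) :
      RuleStep O N (pre ++ (x :: v) :: post) (pre ++ [x] :: (s' :: v) :: post)
  | ruleE1 (post : List (List CQ)) (x s' : CQ)
      (hx : ¬ equivO O x topCQ) (hs' : s' ∈ N x) :
      RuleStep O N ([x] :: post) ([s'] :: [x] :: post)
  | ruleE2 (post : List (List CQ)) (v : List CQ) (x : CQ)
      (hx : ¬ equivO O x topCQ) (hv : v ≠ []) :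
      RuleStep O N ((x :: v) :: post) ([x] :: (x :: v) :: post)

/-! ### Building a path query from blocks and separators -/

def blockChain (blk : List CQ) : List (TOp × CQ) :=
  (blk.drop 1).map (fun s => (TOp.nxt, s))

/-- The relation sequence `R_i`: value `0` encodes a single `≤`, value `v ≥ 1`
encodes `v`-many `<` (with `⊤` on the internal positions); `s` is the first query
of the next block. -/
def sepChain : ℕ → CQ → List (TOp × CQ)
  | 0, s => [(TOp.diar, s)]
  | (k+1), s => List.replicate k (TOp.dia, topCQ) ++ [(TOp.dia, s)]

def buildTail : List (List CQ) → List ℕ → List (TOp × CQ)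
  | [], _ => []
  | [blk], _ => blockChain blk
  | blk :: blk' :: rest, [] =>
      blockChain blk ++ sepChain 1 (blk'.headD default) ++ buildTail (blk' :: rest) []
  | blk :: blk' :: rest, sep :: seps =>
      blockChain blk ++ sepChain sep (blk'.headD default) ++ buildTail (blk' :: rest) seps

/-- The path query `q_0 R_1 q_1 ⋯ R_n q_n` with blocks `bs` and separators `seps`. -/
def buildTPQ (bs : List (List CQ)) (seps : List ℕ) : TPQ :=
  ⟨(bs.headD []).headD default, buildTail bs seps⟩

/-- The position, in `buildTPQ bs seps`, of the `j`-th query of block `i`. -/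
def qPos (bs : List (List CQ)) (seps : List ℕ) (i j : ℕ) : ℕ :=
  ((bs.take i).map List.length).sum + ((seps.take i).map Nat.pred).sum + j

/-! ## Until queries -/

/-- A path query `r₀ ∧ (l₁ U (r₁ ∧ (l₂ U (⋯ (lₙ U rₙ)⋯))))` from `LTL_p^U(Q^σ)`;
`none` encodes `l_i = ⊥`. -/
structure UQ where
  head : CQ
  tail : List (Option CQ × CQ)

def uEntailsAux (O : Ontology) (D : TDI) (a : Const) :
    List (Option CQ × CQ) → ℕ → CQ → Prop
  | [], ℓ, r => cert O (D.nth ℓ) r a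
  | (l, r') :: rest, ℓ, r =>
      cert O (D.nth ℓ) r a ∧
      ∃ m, ℓ < m ∧ uEntailsAux O D a rest m r' ∧
        ∀ k, ℓ < k → k < m →
          match l with
          | none => False
          | some l' => cert O (D.nth k) l' a

def uEntailsT (O : Ontology) (D : TDI) (a : Const) (q : UQ) : Prop :=
  ¬ D.satWith O ∨ uEntailsAux O D a q.tail 0 q.head

def equivU (O : Ontology) (q₁ q₂ : UQ) : Prop :=
  ∀ (D : TDI) (a : Const), a ∈ D.inds → (uEntailsT O D a q₁ ↔ uEntailsT O D a q₂)

def fitsU (O : Ontology) (q : UQ) (E : TExampleSet) : Prop :=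
  (∀ p ∈ E.pos, uEntailsT O p.1 p.2 q) ∧ (∀ p ∈ E.neg, ¬ uEntailsT O p.1 p.2 q)

def uniqCharU (O : Ontology) (C : Set UQ) (q : UQ) (E : TExampleSet) : Prop :=
  E.wf ∧ fitsU O q E ∧ ∀ q' ∈ C, fitsU O q' E → equivU O q q'

def UQ.size (q : UQ) : ℕ :=
  q.head.size +
    (q.tail.map (fun p => (match p.1 with | none => 1 | some l => l.size) + p.2.size + 1)).sum

/-- Membership of an until path query in `LTL_p^U(Q^σ)`. -/
def UQ.overQsig (Q : Set CQ) (σ : Sig) (q : UQ) : Prop :=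
  (q.head ∈ Q ∧ q.head.inSig σ) ∧
  ∀ p ∈ q.tail, (p.2 ∈ Q ∧ p.2.inSig σ) ∧ ∀ l, p.1 = some l → l ∈ Q ∧ l.inSig σ

/-- `q` is `O`-peerless: `r_i ⊭_O l_i` and `l_i ⊭_O r_i`. -/
def UQ.peerless (O : Ontology) (q : UQ) : Prop :=
  ∀ p ∈ q.tail, ∀ l, p.1 = some l → ¬ containsO O p.2 l ∧ ¬ containsO O l p.2

def UQclass (Q : Set CQ) (σ : Sig) : Set UQ := {q | q.overQsig Q σ}

theorem singPlus_aux (O : Ontology) (hat : CQ → DataInstance × Const)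
    (hcr : CRWitness O hat) (Q : Set CQ)
    (q : CQ) (hq : q ∈ Q) (hsat : CQ.satWrt O q)
    (E : ExampleSet) (hE : uniqChar O Q q E) :
    uniqChar O Q q ⟨{hat q}, E.neg⟩ := by
  obtain ⟨⟨hwfp, hwfn⟩, ⟨hfitp, hfitn⟩, huniq⟩ := hE
  refine ⟨⟨?_, hwfn⟩, ⟨?_, hfitn⟩, ?_⟩
  · intro p hp
    simp only [Finset.mem_singleton] at hp
    subst hp
    exact hcr.mem q
  · intro p hp
    simp only [Finset.mem_singleton] at hp
    subst hp
    exact (hcr.cr3 q hsat q).mp (fun A a _ h => h)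
  · intro q' hq' ⟨hfp', hfn'⟩
    have hcert : cert O (hat q).1 q' (hat q).2 :=
      hfp' (hat q) (Finset.mem_singleton_self _)
    have hcont : containsO O q q' := (hcr.cr3 q hsat q').mpr hcert
    exact huniq q' hq' ⟨fun p hp => hcont p.1 p.2 (hwfp p hp) (hfitp p hp), hfn'⟩

/-- replacing the positive part of a unique characterisation by `{q̂}`
yields a unique characterisation; hence every satisfiable uniquely characterisable
query has a singular⁺ characterisation. -/
theorem statement3 (O : Ontology) (hat : CQ → DataInstance × Const)
    (hcr : CRWitness O hat) (Q : Set CQ)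
    (hQconj : ∀ q₁ ∈ Q, ∀ q₂ ∈ Q, CQ.and q₁ q₂ ∈ Q)
    (q : CQ) (hq : q ∈ Q) (hsat : CQ.satWrt O q)
    (E : ExampleSet) (hE : uniqChar O Q q E) :
    uniqChar O Q q ⟨{hat q}, E.neg⟩ ∧
    ∀ q' ∈ Q, CQ.satWrt O q' → (∃ E', uniqChar O Q q' E') →
      ∃ N : Finset (DataInstance × Const), uniqChar O Q q' ⟨{hat q'}, N⟩ := by
  refine ⟨singPlus_aux O hat hcr Q q hq hsat E hE, ?_⟩
  intro q' hq' hsat' ⟨E', hE'⟩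
  exact ⟨E'.neg, singPlus_aux O hat hcr Q q' hq' hsat' E' hE'⟩

end OMQLean
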